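/- In the VFS calculus, for every term M, the generalized cut C_v(M : z.↑z) with the identity context reduces in VFS to M. -/

import Mathlib

namespace Paper

mutual
/-- Terms of the value-filling style calculus VFS. -/
inductive VTm : Type
| up : VVal → VTm
| cv : VVal → VCtx → VTm
/-- Values of VFS. -/
inductive VVal : Type
| var : String → VVal
| lam : String → VTm → VVal
/-- Formal contexts of VFS: x.M or (W,x.M). -/
inductive VCtx : Type
| cont : String → VTm → VCtx
| arg : VVal → String → VTm → VCtx
end

mutual
def VVal.sub (V : VVal) (y : String) : VVal → VVal
| .var z => if z = y then V else .var z
| .lam z M => if z = y then .lam z M else .lam z (VTm.sub V y M)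
def VTm.sub (V : VVal) (y : String) : VTm → VTm
| .up W => .up (VVal.sub V y W)
| .cv W c => .cv (VVal.sub V y W) (VCtx.sub V y c)
def VCtx.sub (V : VVal) (y : String) : VCtx → VCtx
| .cont x M => .cont x (if x = y then M else VTm.sub V y M)
| .arg W x M => .arg (VVal.sub V y W) x (if x = y then M else VTm.sub V y M)
end

mutual
/-- The generalized cut Cv(M : c). -/
def VTm.gcut : VTm → VCtx → VTm
| .up V, c => .cv V c
| .cv V c, c' => .cv V (VCtx.comp c c')
/-- Composition of formal contexts (c : c'). -/
def VCtx.comp : VCtx → VCtx → VCtx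
| .cont x M, c' => .cont x (VTm.gcut M c')
| .arg W x M, c' => .arg W x (VTm.gcut M c')
end

mutual
/-- One-step reduction of VFS on terms, closed under all contexts. -/
inductive VStepT : VTm → VTm → Prop
| bv {x M V y N} :
    VStepT (.cv (.lam x M) (.arg V y N)) (.cv V (.cont x (VTm.gcut M (.cont y N))))
| sigmav {V y N} : VStepT (.cv V (.cont y N)) (VTm.sub V y N)
| upC {V V'} : VStepV V V' → VStepT (.up V) (.up V')
| cvV {V V' c} : VStepV V V' → VStepT (.cv V c) (.cv V' c)
| cvC {V c c'} : VStepC c c' → VStepT (.cv V c) (.cv V c')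
/-- One-step reduction of VFS on values. -/
inductive VStepV : VVal → VVal → Prop
| lamC {x M M'} : VStepT M M' → VStepV (.lam x M) (.lam x M')
/-- One-step reduction of VFS on formal contexts. -/
inductive VStepC : VCtx → VCtx → Prop
| contC {x M M'} : VStepT M M' → VStepC (.cont x M) (.cont x M')
| argV {W W' x M} : VStepV W W' → VStepC (.arg W x M) (.arg W' x M)
| argT {W x M M'} : VStepT M M' → VStepC (.arg W x M) (.arg W x M')
end

/-
The identity context z.↑z is a right unit for the generalized cut up to reduction: the cut
travels down the spine of M unchanged until it meets the innermost ↑V, where it forms the single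
σv-redex Cv(V, z.↑z) → ↑V; every other position is untouched, so one step inside the congruence
closure suffices.
-/

abbrev VCtx.identity (z : String) : VCtx := .cont z (.up (.var z))

theorem VTm.sub_up_var_self (V : VVal) (z : String) : VTm.sub V z (.up (.var z)) = .up V := by
  simp [VTm.sub, VVal.sub]

open Relation

theorem VStepT.reflTransGen_cvC {V : VVal} {c c' : VCtx} (h : ReflTransGen VStepC c c') :
    ReflTransGen VStepT (.cv V c) (.cv V c') :=
  ReflTransGen.lift (VTm.cv V) (fun _ _ => VStepT.cvC) _ _ h

theorem VStepC.reflTransGen_contC {x : String} {M M' : VTm} (h : ReflTransGen VStepT M M') :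
    ReflTransGen VStepC (.cont x M) (.cont x M') :=
  ReflTransGen.lift (VCtx.cont x) (fun _ _ => VStepC.contC) _ _ h

theorem VStepC.reflTransGen_argT {W : VVal} {x : String} {M M' : VTm}
    (h : ReflTransGen VStepT M M') : ReflTransGen VStepC (.arg W x M) (.arg W x M') :=
  ReflTransGen.lift (VCtx.arg W x) (fun _ _ => VStepC.argT) _ _ h

mutual
theorem VTm.gcut_identity_reduces (z : String) :
    ∀ M : VTm, ReflTransGen VStepT (M.gcut (VCtx.identity z)) M
  | .up V => .single <| by
      have := VStepT.sigmav (V := V) (y := z) (N := .up (.var z))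
      rwa [VTm.sub_up_var_self] at this
  | .cv _ c => VStepT.reflTransGen_cvC (VCtx.comp_identity_reduces z c)

theorem VCtx.comp_identity_reduces (z : String) :
    ∀ c : VCtx, ReflTransGen VStepC (c.comp (VCtx.identity z)) c
  | .cont _ M => VStepC.reflTransGen_contC (VTm.gcut_identity_reduces z M)
  | .arg _ _ M => VStepC.reflTransGen_argT (VTm.gcut_identity_reduces z M)
end

/-- in VFS, the generalized cut of any term M with the identity
context z.↑z reduces in VFS to M. -/
theorem stmt10 (z : String) (M : VTm) :
    Relation.ReflTransGen VStepT (VTm.gcut M (.cont z (.up (.var z)))) M :=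
  VTm.gcut_identity_reduces z M

end Paper
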